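/- arXiv:2112.01355 — 2 statements merged into one kernel-verified Lean document; each statement's English description precedes it below -/
import Mathlib

section
/- Under subextremality one has r_e > m/(1 − Λa²/3). -/
/-!
By Vieta's formulas for the depressed quartic `μ = -(Λ/3) r⁴ + (1 - Λa²/3) r² - 2m r + a²`, its
roots `x₁ < x₂ < x₃ < x₄` sum to zero, `1 - Λa²/3 = -(Λ/3) e₂` and `2m = (Λ/3) (-e₃)`, where `eₖ`
are the elementary symmetric functions of the roots. Hence, with `x₃ = r_e`, `2 (x₃ (1 - Λa²/3) - m) = (Λ/3) (e₃ - 2 x₃ e₂)`.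
Eliminating `x₁`, one gets `-e₃ = (x₂ + x₃)(x₂ + x₄)(x₃ + x₄)`, and since `x₃ + x₄` and `x₂ + x₄` are
positive, `m > 0` forces `x₂ + x₃ > 0`; then `e₃ - 2 x₃ e₂ = (x₃ - x₂) S + (x₃ + x₂)(x₃² + x₂²)` with
`S = -e₂ > 0`.
-/

section Vieta

variable {R : Type*} [CommRing R] [IsDomain R]

theorem cubic_coeffs_eq_zero_of_four_roots {c₀ c₁ c₂ c₃ x₁ x₂ x₃ x₄ : R}
    (h₁₂ : x₁ ≠ x₂) (h₁₃ : x₁ ≠ x₃) (h₁₄ : x₁ ≠ x₄) (h₂₃ : x₂ ≠ x₃) (h₂₄ : x₂ ≠ x₄)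
    (h₃₄ : x₃ ≠ x₄)
    (hroots : ∀ x ∈ ({x₁, x₂, x₃, x₄} : Set R), c₃ * x ^ 3 + c₂ * x ^ 2 + c₁ * x + c₀ = 0) :
    c₃ = 0 ∧ c₂ = 0 ∧ c₁ = 0 ∧ c₀ = 0 := by
  have cancel : ∀ {a b t : R}, a ≠ b → (a - b) * t = 0 → t = 0 := fun hab h =>
    (mul_eq_zero.mp h).resolve_left (sub_ne_zero.mpr hab)
  have f₁ := hroots x₁ (by simp)
  have f₂ := hroots x₂ (by simp)
  have f₃ := hroots x₃ (by simp)
  have f₄ := hroots x₄ (by simp)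
  -- divided differences
  have g₁₂ : c₃ * (x₁ ^ 2 + x₁ * x₂ + x₂ ^ 2) + c₂ * (x₁ + x₂) + c₁ = 0 :=
    cancel h₁₂ (by linear_combination f₁ - f₂)
  have g₁₃ : c₃ * (x₁ ^ 2 + x₁ * x₃ + x₃ ^ 2) + c₂ * (x₁ + x₃) + c₁ = 0 :=
    cancel h₁₃ (by linear_combination f₁ - f₃)
  have g₁₄ : c₃ * (x₁ ^ 2 + x₁ * x₄ + x₄ ^ 2) + c₂ * (x₁ + x₄) + c₁ = 0 :=
    cancel h₁₄ (by linear_combination f₁ - f₄)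
  have k₁₂₃ : c₃ * (x₁ + x₂ + x₃) + c₂ = 0 := cancel h₂₃ (by linear_combination g₁₂ - g₁₃)
  have k₁₂₄ : c₃ * (x₁ + x₂ + x₄) + c₂ = 0 := cancel h₂₄ (by linear_combination g₁₂ - g₁₄)
  have hc₃ : c₃ = 0 := cancel h₃₄ (by linear_combination k₁₂₃ - k₁₂₄)
  have hc₂ : c₂ = 0 := by linear_combination k₁₂₃ - (x₁ + x₂ + x₃) * hc₃
  have hc₁ : c₁ = 0 := by
    linear_combination g₁₂ - (x₁ ^ 2 + x₁ * x₂ + x₂ ^ 2) * hc₃ - (x₁ + x₂) * hc₂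
  refine ⟨hc₃, hc₂, hc₁, ?_⟩
  linear_combination f₁ - x₁ ^ 3 * hc₃ - x₁ ^ 2 * hc₂ - x₁ * hc₁

theorem quartic_vieta {A B C D E x₁ x₂ x₃ x₄ : R}
    (h₁₂ : x₁ ≠ x₂) (h₁₃ : x₁ ≠ x₃) (h₁₄ : x₁ ≠ x₄) (h₂₃ : x₂ ≠ x₃) (h₂₄ : x₂ ≠ x₄)
    (h₃₄ : x₃ ≠ x₄)
    (hroots : ∀ x ∈ ({x₁, x₂, x₃, x₄} : Set R),
      A * x ^ 4 + B * x ^ 3 + C * x ^ 2 + D * x + E = 0) :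
    B = -A * (x₁ + x₂ + x₃ + x₄) ∧
    C = A * (x₁ * x₂ + x₁ * x₃ + x₁ * x₄ + x₂ * x₃ + x₂ * x₄ + x₃ * x₄) ∧
    D = -A * (x₁ * x₂ * x₃ + x₁ * x₂ * x₄ + x₁ * x₃ * x₄ + x₂ * x₃ * x₄) ∧
    E = A * (x₁ * x₂ * x₃ * x₄) := by
  have hdiff : ∀ x ∈ ({x₁, x₂, x₃, x₄} : Set R),
      (B + A * (x₁ + x₂ + x₃ + x₄)) * x ^ 3
        + (C - A * (x₁ * x₂ + x₁ * x₃ + x₁ * x₄ + x₂ * x₃ + x₂ * x₄ + x₃ * x₄)) * x ^ 2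
        + (D + A * (x₁ * x₂ * x₃ + x₁ * x₂ * x₄ + x₁ * x₃ * x₄ + x₂ * x₃ * x₄)) * x
        + (E - A * (x₁ * x₂ * x₃ * x₄)) = 0 := by
    intro x hx
    have hprod : (x - x₁) * (x - x₂) * (x - x₃) * (x - x₄) = 0 := by
      rcases hx with rfl | rfl | rfl | rfl <;> ring
    linear_combination hroots x hx - A * hprod
  obtain ⟨h₃, h₂, h₁, h₀⟩ := cubic_coeffs_eq_zero_of_four_roots h₁₂ h₁₃ h₁₄ h₂₃ h₂₄ h₃₄ hdiff
  exact ⟨by linear_combination h₃, by linear_combination h₂, by linear_combination h₁,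
    by linear_combination h₀⟩

end Vieta

section RootsSummingToZero

variable {K : Type*} [CommRing K] [LinearOrder K] [IsStrictOrderedRing K] {x₁ x₂ x₃ x₄ : K}

theorem esymm_two_neg_of_add_eq_zero (hsum : x₁ + x₂ + x₃ + x₄ = 0) (h₁₂ : x₁ ≠ x₂) :
    x₁ * x₂ + x₁ * x₃ + x₁ * x₄ + x₂ * x₃ + x₂ * x₄ + x₃ * x₄ < 0 := by
  have hsq : 0 < (x₁ - x₂) ^ 2 := by simpa [sq_pos_iff, sub_eq_zero] using h₁₂
  nlinarith [sq_nonneg (x₁ + x₂), sq_nonneg x₃, sq_nonneg x₄]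

theorem two_mul_mul_esymm_two_lt_esymm_three (h₁₂ : x₁ < x₂) (h₂₃ : x₂ < x₃) (h₃₄ : x₃ < x₄)
    (hsum : x₁ + x₂ + x₃ + x₄ = 0)
    (he₃ : x₁ * x₂ * x₃ + x₁ * x₂ * x₄ + x₁ * x₃ * x₄ + x₂ * x₃ * x₄ < 0) :
    2 * x₃ * (x₁ * x₂ + x₁ * x₃ + x₁ * x₄ + x₂ * x₃ + x₂ * x₄ + x₃ * x₄)
      < x₁ * x₂ * x₃ + x₁ * x₂ * x₄ + x₁ * x₃ * x₄ + x₂ * x₃ * x₄ := by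
  obtain rfl : x₁ = -(x₂ + x₃ + x₄) := by linear_combination hsum
  have h₃₄_pos : 0 < x₃ + x₄ := by linarith
  have h₂₄_pos : 0 < x₂ + x₄ := by linarith
  have h₂₃_pos : 0 < x₂ + x₃ := by
    have : 0 < (x₂ + x₃) * ((x₂ + x₄) * (x₃ + x₄)) := by linear_combination he₃
    exact pos_of_mul_pos_left this (mul_pos h₂₄_pos h₃₄_pos).le
  set S := x₂ ^ 2 + x₃ ^ 2 + x₄ ^ 2 + x₂ * x₃ + x₂ * x₄ + x₃ * x₄
  have hS : 0 < S := by nlinarith [sq_nonneg (x₂ + x₃), sq_nonneg (x₂ + x₄), mul_pos h₃₄_pos h₃₄_pos]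
  have hsplit : 0 < (x₃ - x₂) * S + (x₃ + x₂) * (x₃ ^ 2 + x₂ ^ 2) :=
    add_pos_of_pos_of_nonneg (mul_pos (sub_pos.mpr h₂₃) hS)
      (mul_nonneg (by linarith) (by positivity))
  linear_combination hsplit

end RootsSummingToZero

/-- Under subextremality one has `r_e > m/(1 − Λa²/3)`. -/
theorem stmt_11 (Λ m a : ℝ) (hΛ : 0 < Λ) (hm : 0 < m)
    (μ : ℝ → ℝ) (hμ : ∀ r, μ r = (r ^ 2 + a ^ 2) * (1 - Λ * r ^ 2 / 3) - 2 * m * r)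
    (rneg rC re rc : ℝ) (h1 : rneg < rC) (h2 : rC < re) (h3 : re < rc)
    (hr1 : μ rneg = 0) (hr2 : μ rC = 0) (hr3 : μ re = 0) (hr4 : μ rc = 0) :
    re > m / (1 - Λ * a ^ 2 / 3) := by
  have hroots : ∀ x ∈ ({rneg, rC, re, rc} : Set ℝ),
      -(Λ / 3) * x ^ 4 + 0 * x ^ 3 + (1 - Λ * a ^ 2 / 3) * x ^ 2 + -2 * m * x + a ^ 2 = 0 := by
    intro x hx
    have hμx : μ x = 0 := by rcases hx with rfl | rfl | rfl | rfl <;> assumption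
    linear_combination hμx - hμ x
  obtain ⟨hB, hC, hD, -⟩ := quartic_vieta h1.ne (h1.trans h2).ne (h1.trans (h2.trans h3)).ne
    h2.ne (h2.trans h3).ne h3.ne hroots
  have hsum : rneg + rC + re + rc = 0 :=
    (mul_eq_zero.mp (by linear_combination -hB : Λ / 3 * (rneg + rC + re + rc) = 0)).resolve_left
      (by positivity)
  have he₃ : rneg * rC * re + rneg * rC * rc + rneg * re * rc + rC * re * rc < 0 :=
    neg_of_mul_neg_right (by linarith : Λ / 3 * _ < 0) (by positivity)
  have hL : 0 < 1 - Λ * a ^ 2 / 3 := by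
    rw [hC]
    exact mul_pos_of_neg_of_neg (by linarith) (esymm_two_neg_of_add_eq_zero hsum h1.ne)
  have key := mul_lt_mul_of_pos_left (two_mul_mul_esymm_two_lt_esymm_three h1 h2 h3 hsum he₃) hΛ
  rw [gt_iff_lt, div_lt_iff₀ hL]
  linear_combination key / 6 - re * hC - hD / 2
end

section
/- Let θ ∈ (0, π) and (ξ_r, ξ_ψ, ξ_θ) ∈ ℝ³. If q_σ(r₀, θ; ξ_r, ξ_ψ, ξ_θ) = 0, then ξ_r = ξ_ψ = ξ_θ = 0; i.e. the characteristic set of the mode operator is disjoint from {r = r₀}. -/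
/-!
At the critical point `r₀` the term `a² (r₀² - r²)² / μ r` vanishes, so `q_σ(r₀, θ; ·)` is a
sum of three squares with coefficients `μ r₀`, `c θ` and
`b² (r₀² + a² cos² θ)² / ((r₀² + a²)² c θ sin² θ)`.
The first is positive because `μ = -(Λ/3) (r - r₋)(r - r_C)(r - r_e)(r - r_c)` (a quartic is
determined by its leading coefficient and four distinct roots); the last is positive because
`r₀ ≠ 0`, as `μ'(0) = -2m ≠ 0`.
-/

open Polynomial Function Set

theorem cubic_coeffs_eq_zero_of_four_roots_s16 {R : Type*} [CommRing R] [IsDomain R] {a b c d : R}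
    {x : Fin 4 → R} (hx : Injective x)
    (hroot : ∀ i, a * x i ^ 3 + b * x i ^ 2 + c * x i + d = 0) :
    a = 0 ∧ b = 0 ∧ c = 0 ∧ d = 0 := by
  have hP : (⟨a, b, c, d⟩ : Cubic R).toPoly = 0 :=
    eq_zero_of_natDegree_lt_card_of_eval_eq_zero _ hx (by simpa [Cubic.toPoly] using hroot)
      (natDegree_cubic_le.trans_lt (by simp))
  exact Cubic.ext_iff.1 ((Cubic.toPoly_eq_zero_iff _).1 hP)

theorem quartic_eq_mul_prod_sub_of_roots {R : Type*} [CommRing R] [IsDomain R]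
    {f : R → R} {a b c d e : R} (hf : ∀ r, f r = a * r ^ 4 + b * r ^ 3 + c * r ^ 2 + d * r + e)
    {x : Fin 4 → R} (hx : Injective x) (hroot : ∀ i, f (x i) = 0) (r : R) :
    f r = a * ∏ i, (r - x i) := by
  set e₁ := x 0 + x 1 + x 2 + x 3
  set e₂ := x 0 * x 1 + x 0 * x 2 + x 0 * x 3 + x 1 * x 2 + x 1 * x 3 + x 2 * x 3
  set e₃ := x 0 * x 1 * x 2 + x 0 * x 1 * x 3 + x 0 * x 2 * x 3 + x 1 * x 2 * x 3
  set e₄ := x 0 * x 1 * x 2 * x 3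
  have hdiff : ∀ y, f y - a * ∏ i, (y - x i) =
      (b + a * e₁) * y ^ 3 + (c - a * e₂) * y ^ 2 + (d + a * e₃) * y + (e - a * e₄) := by
    intro y
    rw [hf, Fin.prod_univ_four]
    ring
  obtain ⟨h₃, h₂, h₁, h₀⟩ := cubic_coeffs_eq_zero_of_four_roots_s16 hx fun i => by
    rw [← hdiff, hroot, Finset.prod_eq_zero (Finset.mem_univ i) (sub_self _), mul_zero, sub_zero]
  rw [← sub_eq_zero, hdiff, h₃, h₂, h₁, h₀]
  ring

theorem quartic_pos_of_mem_Ioo {f : ℝ → ℝ} {a b c d e : ℝ}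
    (hf : ∀ r, f r = a * r ^ 4 + b * r ^ 3 + c * r ^ 2 + d * r + e) (ha : a < 0)
    {x₁ x₂ x₃ x₄ : ℝ} (h₁₂ : x₁ < x₂) (h₂₃ : x₂ < x₃) (h₃₄ : x₃ < x₄)
    (hx₁ : f x₁ = 0) (hx₂ : f x₂ = 0) (hx₃ : f x₃ = 0) (hx₄ : f x₄ = 0)
    {r : ℝ} (hr : r ∈ Ioo x₃ x₄) : 0 < f r := by
  have hmono : StrictMono ![x₁, x₂, x₃, x₄] := by
    refine Fin.strictMono_iff_lt_succ.2 fun i => ?_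
    fin_cases i <;> assumption
  have hroot : ∀ i, f (![x₁, x₂, x₃, x₄] i) = 0 := by
    intro i
    fin_cases i <;> assumption
  rw [quartic_eq_mul_prod_sub_of_roots hf hmono.injective hroot r, Fin.prod_univ_four]
  obtain ⟨hx₃r, hrx₄⟩ := hr
  have hpos : 0 < (r - x₁) * (r - x₂) * (r - x₃) :=
    mul_pos (mul_pos (by linarith) (by linarith)) (by linarith)
  exact mul_pos_of_neg_of_neg ha (mul_neg_of_pos_of_neg hpos (sub_neg.2 hrx₄))

theorem hasDerivAt_quartic {a b c d e : ℝ} (r : ℝ) :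
    HasDerivAt (fun r => a * r ^ 4 + b * r ^ 3 + c * r ^ 2 + d * r + e)
      (4 * a * r ^ 3 + 3 * b * r ^ 2 + 2 * c * r + d) r := by
  have := (((((hasDerivAt_pow 4 r).const_mul a).add ((hasDerivAt_pow 3 r).const_mul b)).add
    ((hasDerivAt_pow 2 r).const_mul c)).add ((hasDerivAt_id r).const_mul d)).add_const e
  refine this.congr_deriv ?_
  push_cast
  ring

theorem eq_zero_of_pos_mul_sq_add_eq_zero {α β γ x y z : ℝ} (hα : 0 < α) (hβ : 0 < β) (hγ : 0 < γ)
    (h : α * x ^ 2 + β * y ^ 2 + γ * z ^ 2 = 0) : x = 0 ∧ y = 0 ∧ z = 0 := by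
  have hx := mul_nonneg hα.le (sq_nonneg x)
  have hy := mul_nonneg hβ.le (sq_nonneg y)
  have hz := mul_nonneg hγ.le (sq_nonneg z)
  refine ⟨?_, ?_, ?_⟩
  · simpa [hα.ne'] using (show α * x ^ 2 = 0 by linarith)
  · simpa [hβ.ne'] using (show β * y ^ 2 = 0 by linarith)
  · simpa [hγ.ne'] using (show γ * z ^ 2 = 0 by linarith)

/-- The characteristic set of the mode operator `P_σ` is disjoint from
`{r = r₀}`: if `q_σ(r₀, θ; ξ_r, ξ_ψ, ξ_θ) = 0` then `ξ_r = ξ_ψ = ξ_θ = 0`. -/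
theorem stmt_16 (Λ m a : ℝ) (hΛ : 0 < Λ) (hm : 0 < m)
    (μ : ℝ → ℝ) (hμ : ∀ r, μ r = (r ^ 2 + a ^ 2) * (1 - Λ * r ^ 2 / 3) - 2 * m * r)
    (rneg rC re rc : ℝ) (h1 : rneg < rC) (h2 : rC < re) (h3 : re < rc)
    (hr1 : μ rneg = 0) (hr2 : μ rC = 0) (hr3 : μ re = 0) (hr4 : μ rc = 0)
    (r₀ : ℝ) (hr₀ : r₀ ∈ Set.Ioo re rc) (hcrit : deriv μ r₀ = 0)
    (b : ℝ) (hb : b = 1 + Λ * a ^ 2 / 3)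
    (c : ℝ → ℝ) (hc : ∀ θ, c θ = 1 + (Λ * a ^ 2 / 3) * Real.cos θ ^ 2)
    (qσ : ℝ → ℝ → ℝ → ℝ → ℝ → ℝ)
    (hqσ : ∀ r θ ξr ξψ ξθ, qσ r θ ξr ξψ ξθ =
      μ r * ξr ^ 2 + c θ * ξθ ^ 2
        + (b ^ 2 / (r₀ ^ 2 + a ^ 2) ^ 2)
          * ((r₀ ^ 2 + a ^ 2 * Real.cos θ ^ 2) ^ 2 / (c θ * Real.sin θ ^ 2)
            - a ^ 2 * (r₀ ^ 2 - r ^ 2) ^ 2 / μ r) * ξψ ^ 2) :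
    ∀ θ ∈ Set.Ioo (0 : ℝ) Real.pi, ∀ ξr ξψ ξθ : ℝ,
      qσ r₀ θ ξr ξψ ξθ = 0 → ξr = 0 ∧ ξψ = 0 ∧ ξθ = 0 := by
  intro θ hθ ξr ξψ ξθ hq
  have hμ_quartic : ∀ r, μ r =
      -(Λ / 3) * r ^ 4 + 0 * r ^ 3 + (1 - Λ * a ^ 2 / 3) * r ^ 2 + -(2 * m) * r + a ^ 2 := by
    intro r
    rw [hμ]
    ring
  have hμr₀ : 0 < μ r₀ :=
    quartic_pos_of_mem_Ioo hμ_quartic (by linarith) h1 h2 h3 hr1 hr2 hr3 hr4 hr₀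
  have hr₀_ne : r₀ ≠ 0 := by
    rintro rfl
    rw [funext hμ_quartic, (hasDerivAt_quartic 0).deriv] at hcrit
    norm_num at hcrit
    linarith
  have hsin : 0 < Real.sin θ := Real.sin_pos_of_pos_of_lt_pi hθ.1 hθ.2
  have hcθ : 0 < c θ := by rw [hc]; positivity
  have hb_pos : 0 < b := by rw [hb]; positivity
  rw [hqσ, sub_self, zero_pow two_ne_zero, mul_zero, zero_div, sub_zero] at hq
  obtain ⟨hξr, hξθ, hξψ⟩ := eq_zero_of_pos_mul_sq_add_eq_zero hμr₀ hcθ (by positivity) hq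
  exact ⟨hξr, hξψ, hξθ⟩
end
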